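/- arXiv:2208.14865 — 4 statements merged into one kernel-verified Lean document; each statement's English description precedes it below -/
import Mathlib

section
/- For symmetric positive definite matrices A, B with A = B + C where C is positive semi-definite, for every nonzero vector x, (xᵀAx)/(xᵀBx) ≤ det(A)/det(B). -/
/-!
Write `B = S²` with `S = √B`. The congruent matrix `N = S⁻¹ A S⁻¹` satisfies `N ≥ 1`, so all
its eigenvalues are at least `1`; hence each of them is bounded by their product
`det N = det A / det B`, i.e. `N ≤ det N • 1`. Conjugating back by `S` gives
`A ≤ (det A / det B) • B` in the Loewner order, and evaluating this on `x` is the claim.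
-/

open Matrix
open scoped MatrixOrder

variable {n : Type*} [Fintype n]

theorem Matrix.dotProduct_mulVec_le_of_le {A B : Matrix n n ℝ} (hAB : A ≤ B) (x : n → ℝ) :
    x ⬝ᵥ A *ᵥ x ≤ x ⬝ᵥ B *ᵥ x := by
  have h := (le_iff.mp hAB).dotProduct_mulVec_nonneg x
  rwa [star_trivial, sub_mulVec, dotProduct_sub, sub_nonneg] at h

theorem Matrix.le_det_smul_one_of_one_le [DecidableEq n] {N : Matrix n n ℝ} (hN : 1 ≤ N) :
    N ≤ N.det • 1 := by
  have hH : N.IsHermitian := by simpa using hN.isHermitian.add isHermitian_one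
  have hself : IsSelfAdjoint N := hH
  have one_le_eig : ∀ i, 1 ≤ hH.eigenvalues i := by
    have h := (algebraMap_le_iff_le_spectrum (r := (1 : ℝ)) hself).mp (by simpa using hN)
    rw [hH.spectrum_real_eq_range_eigenvalues] at h
    exact fun i => h _ ⟨i, rfl⟩
  rw [Algebra.smul_def, mul_one, le_algebraMap_iff_spectrum_le hself,
    hH.spectrum_real_eq_range_eigenvalues, hH.det_eq_prod_eigenvalues]
  rintro _ ⟨i, rfl⟩
  simpa using Finset.prod_le_prod_of_subset_of_one_le (Finset.subset_univ {i})
    (fun j _ => zero_le_one.trans (one_le_eig j)) (fun j _ _ => one_le_eig j)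

theorem Matrix.PosDef.le_det_div_det_smul_of_le [DecidableEq n] {A B : Matrix n n ℝ}
    (hB : B.PosDef) (hBA : B ≤ A) : A ≤ (A.det / B.det) • B := by
  set S := CFC.sqrt B
  have hS : S * S = B := CFC.sqrt_mul_sqrt_self B hB.posSemidef.nonneg
  have hSdet : IsUnit S.det :=
    (isUnit_iff_isUnit_det S).mp ((CFC.isUnit_sqrt_iff B hB.posSemidef.nonneg).mpr hB.isUnit)
  have hSself : IsSelfAdjoint S := (CFC.sqrt_nonneg B).isSelfAdjoint
  have hSinv : IsSelfAdjoint S⁻¹ := IsHermitian.inv hSself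
  set N := S⁻¹ * A * S⁻¹
  have hN : 1 ≤ N := by
    calc (1 : Matrix n n ℝ) = S⁻¹ * B * S⁻¹ := by
          rw [← hS, ← mul_assoc, nonsing_inv_mul _ hSdet, one_mul, mul_nonsing_inv _ hSdet]
      _ ≤ N := hSinv.conjugate_le_conjugate hBA
  have hA : A = S * N * S := by
    rw [← mul_assoc S, nonsing_inv_mul_cancel_right _ _ hSdet,
      mul_nonsing_inv_cancel_left _ _ hSdet]
  have hdet : N.det = A.det / B.det := by
    rw [← hS]
    simp only [N, det_mul, det_nonsing_inv, Ring.inverse_eq_inv']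
    ring
  calc A = S * N * S := hA
    _ ≤ S * (N.det • 1) * S := hSself.conjugate_le_conjugate (le_det_smul_one_of_one_le hN)
    _ = (A.det / B.det) • B := by rw [hdet, mul_smul_comm, mul_one, smul_mul_assoc, hS]

theorem stmt0_general {d : ℕ} (A B C : Matrix (Fin d) (Fin d) ℝ)
    (hB : B.PosDef) (hC : C.PosSemidef) (hABC : A = B + C)
    (x : Fin d → ℝ) (hx : x ≠ 0) :
    (x ⬝ᵥ A.mulVec x) / (x ⬝ᵥ B.mulVec x) ≤ A.det / B.det := by
  have hBA : B ≤ A := by rwa [le_iff, hABC, add_sub_cancel_left]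
  have hxBx : 0 < x ⬝ᵥ B *ᵥ x := by simpa using hB.dotProduct_mulVec_pos hx
  rw [div_le_iff₀ hxBx]
  simpa only [smul_mulVec, dotProduct_smul, smul_eq_mul] using
    dotProduct_mulVec_le_of_le (hB.le_det_div_det_smul_of_le hBA) x

/-- For symmetric positive definite matrices `A`, `B` with `A = B + C` where `C` is
positive semi-definite, for every nonzero vector `x`,
`(xᵀAx)/(xᵀBx) ≤ det(A)/det(B)`. -/
theorem stmt0 {d : ℕ} (A B C : Matrix (Fin d) (Fin d) ℝ)
    (hA : A.PosDef) (hB : B.PosDef) (hC : C.PosSemidef) (hABC : A = B + C)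
    (x : Fin d → ℝ) (hx : x ≠ 0) :
    (x ⬝ᵥ A.mulVec x) / (x ⬝ᵥ B.mulVec x) ≤ A.det / B.det :=
  stmt0_general A B C hB hC hABC x hx
end

section
/- Let S_g, S_1, ..., S_{L'} be positive definite d×d matrices and ΔS_1, ..., ΔS_{L'} positive semi-definite d×d matrices such that S_k ≼ S_g for all k, S_g ≼ V where V = S_g + Σ_k ΔS_k, and suppose det(S_g)/det(S_1) ≤ D and det(S_k + ΔS_k)/det(S_k) ≤ U for all k. Then for every nonzero vector θ, (θᵀVθ)/(θᵀS_1θ) ≤ D + (U − 1) + (L' − 1)·D·(U − 1). -/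
/-!
For `A ≻ 0` and `B ≽ 0`, with `M = A^{-1/2} B A^{-1/2}` and eigenvalues `μᵢ ≥ 0` of `M`,
`det (A + B) / det A = det (1 + M) = ∏ (1 + μᵢ) ≥ 1 + max μᵢ`, hence
`B ≼ (det (A + B) / det A - 1) • A`. Applied to `(S₁, S_g - S₁)` this gives `S_g ≼ D • S₁`, and
applied to `(S_k, ΔS_k)` it gives `ΔS_k ≼ (U - 1) • S_k ≼ (U - 1) • S_g ≼ (U - 1) D • S₁`.
Summing `V = S_g + ∑ ΔS_k`, keeping the sharper bound for `k = 1`, gives the claim.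
-/

open Matrix
open scoped MatrixOrder

namespace Matrix

variable {n : Type*} [Fintype n]

theorem dotProduct_mulVec_le_of_le_s1 {A B : Matrix n n ℝ} (h : A ≤ B) (x : n → ℝ) :
    x ⬝ᵥ A *ᵥ x ≤ x ⬝ᵥ B *ᵥ x := by
  have := (le_iff.mp h).dotProduct_mulVec_nonneg x
  rwa [star_trivial, sub_mulVec, dotProduct_sub, sub_nonneg] at this

variable [DecidableEq n]

theorem IsHermitian.det_one_add {M : Matrix n n ℝ} (hM : M.IsHermitian) :
    (1 + M).det = ∏ i, (1 + hM.eigenvalues i) := by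
  have : 1 + M = cfc (fun x : ℝ => 1 + x) M := by
    rw [cfc_const_add (1 : ℝ) (fun x => x) M, cfc_id' ℝ M, map_one]
  rw [this, hM.cfc_eq]
  simp [IsHermitian.cfc, -Unitary.conjStarAlgAut_apply]

theorem PosSemidef.le_smul_one_of_det_one_add_le {M : Matrix n n ℝ} (hM : M.PosSemidef) {u : ℝ}
    (hdet : (1 + M).det ≤ u) : M ≤ (u - 1) • 1 := by
  rw [← Algebra.algebraMap_eq_smul_one]
  refine le_algebraMap_of_spectrum_le (fun x hx => ?_) hM.isHermitian.isSelfAdjoint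
  rw [hM.isHermitian.spectrum_real_eq_range_eigenvalues] at hx
  obtain ⟨i, rfl⟩ := hx
  have one_le_factor (j : n) : 1 ≤ 1 + hM.isHermitian.eigenvalues j :=
    le_add_of_nonneg_right (hM.eigenvalues_nonneg j)
  have : 1 + hM.isHermitian.eigenvalues i ≤ (1 + M).det := by
    rw [hM.isHermitian.det_one_add,
      ← Finset.prod_singleton (fun j => 1 + hM.isHermitian.eigenvalues j) i]
    exact Finset.prod_le_prod_of_subset_of_one_le (Finset.subset_univ _)
      (fun j _ => zero_le_one.trans (one_le_factor j)) (fun j _ _ => one_le_factor j)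
  linarith

theorem PosDef.le_smul_of_det_add_le {A B : Matrix n n ℝ} (hA : A.PosDef) (hB : B.PosSemidef)
    {u : ℝ} (hdet : (A + B).det ≤ u * A.det) : B ≤ (u - 1) • A := by
  set R := CFC.sqrt A
  have hRdet : IsUnit R.det :=
    (isUnit_iff_isUnit_det R).mp ((CFC.isUnit_sqrt_iff A hA.posSemidef.nonneg).mpr hA.isUnit)
  have hRR : R * R = A := CFC.sqrt_mul_sqrt_self A hA.posSemidef.nonneg
  have hRs : Rᴴ = R := (CFC.sqrt_nonneg A).isSelfAdjoint.star_eq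
  have hRis : (R⁻¹)ᴴ = R⁻¹ := by rw [conjTranspose_nonsing_inv, hRs]
  set M := R⁻¹ * B * R⁻¹
  have hM : M.PosSemidef := by
    simpa only [hRis] using hB.conjTranspose_mul_mul_same R⁻¹
  have conj_one : Rᴴ * 1 * R = A := by rw [hRs, Matrix.mul_one, hRR]
  have conj_M : Rᴴ * M * R = B := by
    simp only [hRs, M, ← Matrix.mul_assoc, mul_nonsing_inv R hRdet, Matrix.one_mul]
    rw [Matrix.mul_assoc, nonsing_inv_mul R hRdet, Matrix.mul_one]
  have inv_conj_A : R⁻¹ * A * R⁻¹ = 1 := by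
    rw [← hRR, ← Matrix.mul_assoc, nonsing_inv_mul R hRdet, Matrix.one_mul,
      mul_nonsing_inv R hRdet]
  have hdetM : (1 + M).det ≤ u := by
    have hdet_inv : R⁻¹.det * R⁻¹.det * A.det = 1 := by
      rw [mul_right_comm, ← det_mul, ← det_mul, inv_conj_A, det_one]
    calc (1 + M).det = R⁻¹.det * R⁻¹.det * (A + B).det := by
          rw [← inv_conj_A, ← Matrix.add_mul, ← Matrix.mul_add, det_mul, det_mul]; ring
      _ ≤ R⁻¹.det * R⁻¹.det * (u * A.det) := by gcongr; exact mul_self_nonneg _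
      _ = u := by rw [mul_left_comm, hdet_inv, mul_one]
  have := star_left_conjugate_le_conjugate (hM.le_smul_one_of_det_one_add_le hdetM) R
  rwa [star_eq_conjTranspose, conj_M, Matrix.mul_smul, Matrix.smul_mul, conj_one] at this

theorem PosDef.dotProduct_mulVec_le_of_det_add_le {A B : Matrix n n ℝ} (hA : A.PosDef)
    (hB : B.PosSemidef) {u : ℝ} (hdet : (A + B).det ≤ u * A.det) (x : n → ℝ) :
    x ⬝ᵥ B *ᵥ x ≤ (u - 1) * (x ⬝ᵥ A *ᵥ x) := by
  simpa only [smul_mulVec, dotProduct_smul, smul_eq_mul] using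
    dotProduct_mulVec_le_of_le_s1 (hA.le_smul_of_det_add_le hB hdet) x

end Matrix

theorem Fintype.sum_le_apply_add_mul {ι : Type*} [Fintype ι] {f : ι → ℝ} {b : ℝ}
    (hf : ∀ j, f j ≤ b) (i : ι) : ∑ j, f j ≤ f i + ((Fintype.card ι : ℝ) - 1) * b := by
  classical
  have : Nonempty ι := ⟨i⟩
  rw [← Finset.add_sum_erase _ _ (Finset.mem_univ i)]
  gcongr
  calc ∑ j ∈ Finset.univ.erase i, f j ≤ (Finset.univ.erase i).card • b :=
        Finset.sum_le_card_nsmul _ _ _ fun j _ => hf j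
    _ = ((Fintype.card ι : ℝ) - 1) * b := by
        rw [Finset.card_erase_of_mem (Finset.mem_univ i), nsmul_eq_mul, Finset.card_univ,
          Nat.cast_pred Fintype.card_pos]

theorem stmt1_general {d L' : ℕ} (hL : 0 < L') (U D : ℝ) (hU : 1 ≤ U)
    (Sg V : Matrix (Fin d) (Fin d) ℝ) (S ΔS : Fin L' → Matrix (Fin d) (Fin d) ℝ)
    (hS : ∀ k, (S k).PosDef) (hΔS : ∀ k, (ΔS k).PosSemidef)
    (hle : ∀ k, (Sg - S k).PosSemidef)
    (hV : V = Sg + ∑ k, ΔS k)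
    (hdetD : Sg.det / (S ⟨0, hL⟩).det ≤ D)
    (hdetU : ∀ k, (S k + ΔS k).det / (S k).det ≤ U)
    (θ : Fin d → ℝ) (hθ : θ ≠ 0) :
    (θ ⬝ᵥ V.mulVec θ) / (θ ⬝ᵥ (S ⟨0, hL⟩).mulVec θ) ≤
      D + (U - 1) + ((L' : ℝ) - 1) * D * (U - 1) := by
  set k₀ : Fin L' := ⟨0, hL⟩
  have hS₀_pos : 0 < θ ⬝ᵥ S k₀ *ᵥ θ := by
    simpa only [star_trivial] using (hS k₀).dotProduct_mulVec_pos hθ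
  have hSg_le : θ ⬝ᵥ Sg *ᵥ θ ≤ D * (θ ⬝ᵥ S k₀ *ᵥ θ) := by
    have := (hS k₀).dotProduct_mulVec_le_of_det_add_le (u := D) (hle k₀)
      (by rwa [add_sub_cancel, ← div_le_iff₀ (hS k₀).det_pos]) θ
    rw [sub_mulVec, dotProduct_sub] at this
    linarith
  have hΔS_le (k : Fin L') : θ ⬝ᵥ ΔS k *ᵥ θ ≤ (U - 1) * (θ ⬝ᵥ S k *ᵥ θ) :=
    (hS k).dotProduct_mulVec_le_of_det_add_le (hΔS k)
      (by rw [← div_le_iff₀ (hS k).det_pos]; exact hdetU k) θ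
  have hΔS_le_S₀ (k : Fin L') : θ ⬝ᵥ ΔS k *ᵥ θ ≤ (U - 1) * D * (θ ⬝ᵥ S k₀ *ᵥ θ) := by
    have hU' : 0 ≤ U - 1 := sub_nonneg.mpr hU
    calc θ ⬝ᵥ ΔS k *ᵥ θ ≤ (U - 1) * (θ ⬝ᵥ S k *ᵥ θ) := hΔS_le k
      _ ≤ (U - 1) * (θ ⬝ᵥ Sg *ᵥ θ) := by
        gcongr; exact dotProduct_mulVec_le_of_le_s1 (le_iff.mpr (hle k)) θ
      _ ≤ (U - 1) * (D * (θ ⬝ᵥ S k₀ *ᵥ θ)) := by gcongr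
      _ = (U - 1) * D * (θ ⬝ᵥ S k₀ *ᵥ θ) := by ring
  have hV_eq : θ ⬝ᵥ V *ᵥ θ = θ ⬝ᵥ Sg *ᵥ θ + ∑ k, θ ⬝ᵥ ΔS k *ᵥ θ := by
    rw [hV, add_mulVec, dotProduct_add, sum_mulVec, dotProduct_sum]
  have hsum := Fintype.sum_le_apply_add_mul hΔS_le_S₀ k₀
  rw [Fintype.card_fin] at hsum
  rw [div_le_iff₀ hS₀_pos, hV_eq]
  linarith [hΔS_le k₀]

/-- Deviation bound between the fully synchronized Gram matrix `V` and a delayed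
local copy `S 0` in the federated bandit communication protocol. -/
theorem stmt1 {d L' : ℕ} (hL : 0 < L') (U D : ℝ) (hU : 1 ≤ U) (hD : 1 ≤ D)
    (Sg V : Matrix (Fin d) (Fin d) ℝ) (S ΔS : Fin L' → Matrix (Fin d) (Fin d) ℝ)
    (hSg : Sg.PosDef) (hS : ∀ k, (S k).PosDef) (hΔS : ∀ k, (ΔS k).PosSemidef)
    (hle : ∀ k, (Sg - S k).PosSemidef)
    (hV : V = Sg + ∑ k, ΔS k)
    (hgV : (V - Sg).PosSemidef)
    (hdetD : Sg.det / (S ⟨0, hL⟩).det ≤ D)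
    (hdetU : ∀ k, (S k + ΔS k).det / (S k).det ≤ U)
    (θ : Fin d → ℝ) (hθ : θ ≠ 0) :
    (θ ⬝ᵥ V.mulVec θ) / (θ ⬝ᵥ (S ⟨0, hL⟩).mulVec θ) ≤
      D + (U - 1) + ((L' : ℝ) - 1) * D * (U - 1) :=
  stmt1_general hL U D hU Sg V S ΔS hS hΔS hle hV hdetD hdetU θ hθ
end

section
/- Suppose H₁, ..., H_{L'} are symmetric positive definite d×d matrices with ρ_min·I ≼ H_k ≼ ρ_max·I for all k, and h₁, ..., h_{L'} ∈ ℝ^d satisfy ‖h_k‖_{H_k⁻¹} ≤ κ. Let H = Σ_k H_k and h = Σ_k h_k. Then ‖h‖_{H⁻¹} ≤ √(L')·κ and for any θ with ‖θ‖ ≤ 1, ‖Hθ‖_{H⁻¹} ≤ √(L'·ρ_max). -/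
/-!
For a positive definite `M`, the quadratic form of `M⁻¹` is a Legendre transform:
`yᵀ M⁻¹ y = max_z (2 zᵀ y - zᵀ M z)`, the maximum being attained at `z = M⁻¹ y`.
Evaluating this at the maximiser `z` for `∑ Hₖ` and `∑ hₖ` splits the right-hand side into a sum of
terms `2 zᵀ hₖ - zᵀ Hₖ z ≤ hₖᵀ Hₖ⁻¹ hₖ ≤ κ²`, which gives the first bound. The second one is
`(Hθ)ᵀ H⁻¹ (Hθ) = θᵀ H θ = ∑ θᵀ Hₖ θ ≤ L' ρ_max`.
-/

open Matrix

namespace Matrix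

variable {n R : Type*} [Fintype n]

lemma IsHermitian.dotProduct_mulVec_comm [CommSemiring R] [StarRing R] [TrivialStar R]
    {M : Matrix n n R} (hM : M.IsHermitian) (x y : n → R) : x ⬝ᵥ M *ᵥ y = y ⬝ᵥ M *ᵥ x := by
  rw [dotProduct_mulVec, ← mulVec_transpose, dotProduct_comm,
    ← conjTranspose_eq_transpose_of_trivial, hM.eq]

lemma mulVec_inv_mulVec [DecidableEq n] [CommRing R] {M : Matrix n n R} (hM : IsUnit M)
    (y : n → R) : M *ᵥ M⁻¹ *ᵥ y = y := by
  rw [mulVec_mulVec, mul_nonsing_inv _ ((isUnit_iff_isUnit_det M).mp hM), one_mulVec]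

lemma inv_mulVec_mulVec [DecidableEq n] [CommRing R] {M : Matrix n n R} (hM : IsUnit M)
    (y : n → R) : M⁻¹ *ᵥ M *ᵥ y = y := by
  rw [mulVec_mulVec, nonsing_inv_mul _ ((isUnit_iff_isUnit_det M).mp hM), one_mulVec]

lemma PosDef.two_mul_dotProduct_sub_le [DecidableEq n] {M : Matrix n n ℝ} (hM : M.PosDef)
    (y z : n → ℝ) :
    2 * (z ⬝ᵥ y) - z ⬝ᵥ M *ᵥ z ≤ y ⬝ᵥ M⁻¹ *ᵥ y := by
  set w := M⁻¹ *ᵥ y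
  have hw : M *ᵥ w = y := mulVec_inv_mulVec hM.isUnit y
  have hsq : 0 ≤ (z - w) ⬝ᵥ M *ᵥ (z - w) := by
    simpa using hM.posSemidef.dotProduct_mulVec_nonneg (z - w)
  have hsymm := hM.isHermitian.dotProduct_mulVec_comm w z
  simp only [mulVec_sub, dotProduct_sub, sub_dotProduct, hw] at hsq
  rw [hsymm, hw, dotProduct_comm w y] at hsq
  linarith

lemma dotProduct_inv_mulVec_eq [DecidableEq n] [CommRing R] {M : Matrix n n R} (hM : IsUnit M)
    (y : n → R) :
    y ⬝ᵥ M⁻¹ *ᵥ y = 2 * ((M⁻¹ *ᵥ y) ⬝ᵥ y) - (M⁻¹ *ᵥ y) ⬝ᵥ M *ᵥ M⁻¹ *ᵥ y := by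
  rw [mulVec_inv_mulVec hM, dotProduct_comm y]
  ring

theorem sum_dotProduct_inv_sum_mulVec_le [DecidableEq n] {ι : Type*} {s : Finset ι}
    (hs : s.Nonempty) {H : ι → Matrix n n ℝ} (hH : ∀ i ∈ s, (H i).PosDef) (h : ι → n → ℝ) :
    (∑ i ∈ s, h i) ⬝ᵥ (∑ i ∈ s, H i)⁻¹ *ᵥ ∑ i ∈ s, h i ≤ ∑ i ∈ s, h i ⬝ᵥ (H i)⁻¹ *ᵥ h i := by
  set z := (∑ i ∈ s, H i)⁻¹ *ᵥ ∑ i ∈ s, h i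
  calc (∑ i ∈ s, h i) ⬝ᵥ (∑ i ∈ s, H i)⁻¹ *ᵥ ∑ i ∈ s, h i
      = 2 * (z ⬝ᵥ ∑ i ∈ s, h i) - z ⬝ᵥ (∑ i ∈ s, H i) *ᵥ z :=
        dotProduct_inv_mulVec_eq (posDef_sum hs hH).isUnit _
    _ = ∑ i ∈ s, (2 * (z ⬝ᵥ h i) - z ⬝ᵥ H i *ᵥ z) := by
        simp only [sum_mulVec, dotProduct_sum, Finset.sum_sub_distrib, Finset.mul_sum]
    _ ≤ ∑ i ∈ s, h i ⬝ᵥ (H i)⁻¹ *ᵥ h i :=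
        Finset.sum_le_sum fun i hi => (hH i hi).two_mul_dotProduct_sub_le (h i) z

lemma dotProduct_mulVec_le_of_posSemidef_smul_one_sub [DecidableEq n]
    {M : Matrix n n ℝ} {c : ℝ} (hM : (c • 1 - M).PosSemidef) (x : n → ℝ) :
    x ⬝ᵥ M *ᵥ x ≤ c * (x ⬝ᵥ x) := by
  have := hM.dotProduct_mulVec_nonneg x
  simp only [star_trivial, sub_mulVec, smul_mulVec, one_mulVec, dotProduct_sub,
    dotProduct_smul, smul_eq_mul] at this
  linarith

end Matrix

theorem stmt10_general {d L' : ℕ} (hL : 0 < L') (ρmin ρmax κ : ℝ)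
    (hρmin : 0 < ρmin) (hρ : ρmin ≤ ρmax) (hκ : 0 ≤ κ)
    (H : Fin L' → Matrix (Fin d) (Fin d) ℝ) (h : Fin L' → (Fin d → ℝ))
    (hHpd : ∀ k, (H k).PosDef)
    (hhi : ∀ k, (ρmax • (1 : Matrix (Fin d) (Fin d) ℝ) - H k).PosSemidef)
    (hh : ∀ k, Real.sqrt (h k ⬝ᵥ (H k)⁻¹.mulVec (h k)) ≤ κ) :
    Real.sqrt ((∑ k, h k) ⬝ᵥ (∑ k, H k)⁻¹.mulVec (∑ k, h k)) ≤ Real.sqrt L' * κ ∧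
    ∀ θ : Fin d → ℝ, Real.sqrt (θ ⬝ᵥ θ) ≤ 1 →
      Real.sqrt ((∑ k, H k).mulVec θ ⬝ᵥ (∑ k, H k)⁻¹.mulVec ((∑ k, H k).mulVec θ)) ≤
        Real.sqrt ((L' : ℝ) * ρmax) := by
  have huniv : (Finset.univ : Finset (Fin L')).Nonempty := ⟨⟨0, hL⟩, Finset.mem_univ _⟩
  have hHpd' : ∀ k ∈ Finset.univ, (H k).PosDef := fun k _ => hHpd k
  constructor
  · have hnoise : ∀ k ∈ Finset.univ, h k ⬝ᵥ (H k)⁻¹ *ᵥ h k ≤ κ ^ 2 :=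
      fun k _ => (Real.sqrt_le_iff.mp (hh k)).2
    refine Real.sqrt_le_iff.mpr ⟨by positivity, ?_⟩
    calc _ ≤ ∑ k, h k ⬝ᵥ (H k)⁻¹ *ᵥ h k := sum_dotProduct_inv_sum_mulVec_le huniv hHpd' h
      _ ≤ L' * κ ^ 2 := by simpa using Finset.sum_le_card_nsmul _ _ _ hnoise
      _ = (Real.sqrt L' * κ) ^ 2 := by rw [mul_pow, Real.sq_sqrt L'.cast_nonneg]
  · intro θ hθ
    have hθ1 : θ ⬝ᵥ θ ≤ 1 := Real.sqrt_le_one.mp hθ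
    have hρmax : 0 ≤ ρmax := hρmin.le.trans hρ
    rw [inv_mulVec_mulVec (posDef_sum huniv hHpd').isUnit, dotProduct_comm]
    refine Real.sqrt_le_sqrt ?_
    calc θ ⬝ᵥ (∑ k, H k) *ᵥ θ = ∑ k, θ ⬝ᵥ H k *ᵥ θ := by
          rw [sum_mulVec, dotProduct_sum]
      _ ≤ ∑ _k : Fin L', ρmax * (θ ⬝ᵥ θ) := Finset.sum_le_sum fun k _ =>
          dotProduct_mulVec_le_of_posSemidef_smul_one_sub (hhi k) θ
      _ ≤ L' * ρmax := by
          rw [Finset.sum_const, Finset.card_univ, Fintype.card_fin, nsmul_eq_mul]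
          exact mul_le_mul_of_nonneg_left (mul_le_of_le_one_right hρmax hθ1) L'.cast_nonneg

/-- Noise-aggregation bounds for summed privatizer perturbations. -/
theorem stmt10 {d L' : ℕ} (hL : 0 < L') (ρmin ρmax κ : ℝ)
    (hρmin : 0 < ρmin) (hρ : ρmin ≤ ρmax) (hκ : 0 ≤ κ)
    (H : Fin L' → Matrix (Fin d) (Fin d) ℝ) (h : Fin L' → (Fin d → ℝ))
    (hHpd : ∀ k, (H k).PosDef)
    (hlo : ∀ k, ((H k) - ρmin • (1 : Matrix (Fin d) (Fin d) ℝ)).PosSemidef)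
    (hhi : ∀ k, (ρmax • (1 : Matrix (Fin d) (Fin d) ℝ) - H k).PosSemidef)
    (hh : ∀ k, Real.sqrt (h k ⬝ᵥ (H k)⁻¹.mulVec (h k)) ≤ κ) :
    Real.sqrt ((∑ k, h k) ⬝ᵥ (∑ k, H k)⁻¹.mulVec (∑ k, h k)) ≤ Real.sqrt L' * κ ∧
    ∀ θ : Fin d → ℝ, Real.sqrt (θ ⬝ᵥ θ) ≤ 1 →
      Real.sqrt ((∑ k, H k).mulVec θ ⬝ᵥ (∑ k, H k)⁻¹.mulVec ((∑ k, H k).mulVec θ)) ≤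
        Real.sqrt ((L' : ℝ) * ρmax) :=
  stmt10_general hL ρmin ρmax κ hρmin hρ hκ H h hHpd hhi hh
end

section
/- Let θ* ∈ ℝ^d with ‖θ*‖ ≤ 1, x₁, ..., x_N ∈ ℝ^d, η₁, ..., η_N ∈ ℝ, H a symmetric positive definite d×d matrix, and h ∈ ℝ^d. Define S = H + Σ_k x_k x_kᵀ, u = h + Σ_k x_k(x_kᵀθ* + η_k), and θ̂ = S⁻¹u. Then ‖θ* − θ̂‖_S ≤ ‖Hθ*‖_{H⁻¹} + ‖Σ_k x_k η_k‖_{(Σ_k x_k x_kᵀ + λ_min(H)·I)⁻¹} + ‖h‖_{H⁻¹}. -/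
/-!
Write `r = S θ* - u = Hθ* - Σ η_k x_k - h`. Then `θ* - θ̂ = S⁻¹ r`, so `‖θ* - θ̂‖_S = ‖r‖_{S⁻¹}`,
and the triangle inequality for the seminorm `‖·‖_{S⁻¹}` splits this into three terms. Each is
bounded using that matrix inversion reverses the Loewner order: `H ≤ S` for the first and last
term, and `Σ x_k x_kᵀ + λ_min(H) I ≤ Σ x_k x_kᵀ + H = S` for the noise term.
-/

open Matrix
open scoped MatrixOrder

namespace Matrix

variable {n : Type*} [Fintype n]

lemma sqrt_dotProduct_mulVec_eq_norm {M : Matrix n n ℝ} (hM : M.PosSemidef) (v : n → ℝ) :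
    √(v ⬝ᵥ M *ᵥ v) = @norm _ (M.toSeminormedAddCommGroup hM).toNorm v := by
  rw [dotProduct_comm]; rfl

lemma sqrt_dotProduct_mulVec_sub_le {M : Matrix n n ℝ} (hM : M.PosSemidef) (a b : n → ℝ) :
    √((a - b) ⬝ᵥ M *ᵥ (a - b)) ≤ √(a ⬝ᵥ M *ᵥ a) + √(b ⬝ᵥ M *ᵥ b) := by
  simpa only [sqrt_dotProduct_mulVec_eq_norm hM] using
    @norm_sub_le _ (M.toSeminormedAddCommGroup hM).toSeminormedAddGroup a b

lemma sum_vecMulVec_self_mulVec {α ι : Type*} [CommSemiring α] [Fintype ι]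
    (x : ι → n → α) (v : n → α) :
    (∑ k, vecMulVec (x k) (x k)) *ᵥ v = ∑ k, (x k ⬝ᵥ v) • x k := by
  simp only [sum_mulVec, vecMulVec_mulVec, op_smul_eq_smul]

variable [DecidableEq n]

lemma sub_inv_mulVec_dotProduct_mulVec {S : Matrix n n ℝ} (hS : IsUnit S.det) (v u : n → ℝ) :
    (v - S⁻¹ *ᵥ u) ⬝ᵥ S *ᵥ (v - S⁻¹ *ᵥ u) = (S *ᵥ v - u) ⬝ᵥ S⁻¹ *ᵥ (S *ᵥ v - u) := by
  have hv : v - S⁻¹ *ᵥ u = S⁻¹ *ᵥ (S *ᵥ v - u) := by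
    rw [mulVec_sub, mulVec_mulVec, nonsing_inv_mul _ hS, one_mulVec]
  rw [hv, mulVec_mulVec, mul_nonsing_inv _ hS, one_mulVec, dotProduct_comm]

lemma dotProduct_inv_mulVec_le_of_le {A B : Matrix n n ℝ} (hA : A.PosDef) (hAB : A ≤ B)
    (y : n → ℝ) : y ⬝ᵥ B⁻¹ *ᵥ y ≤ y ⬝ᵥ A⁻¹ *ᵥ y := by
  have hB : B.PosDef := by simpa using hA.add_posSemidef (le_iff.mp hAB)
  set z := B⁻¹ *ᵥ y
  set w := A⁻¹ *ᵥ y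
  have hBz : B *ᵥ z = y := by
    rw [mulVec_mulVec, mul_nonsing_inv _ hB.det_pos.ne'.isUnit, one_mulVec]
  have hAw : A *ᵥ w = y := by
    rw [mulVec_mulVec, mul_nonsing_inv _ hA.det_pos.ne'.isUnit, one_mulVec]
  have hwAz : w ⬝ᵥ A *ᵥ z = z ⬝ᵥ y := by
    rw [dotProduct_mulVec, ← mulVec_transpose, (isHermitian_iff_isSymm.mp hA.isHermitian).eq,
      hAw, dotProduct_comm]
  have hmono : z ⬝ᵥ A *ᵥ z ≤ z ⬝ᵥ B *ᵥ z := by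
    have := (le_iff.mp hAB).dotProduct_mulVec_nonneg z
    simp only [star_trivial, sub_mulVec, dotProduct_sub] at this
    linarith
  -- `0 ≤ (z - w)ᵀA(z - w) = zᵀAz - 2 zᵀy + wᵀy ≤ zᵀBz - 2 zᵀy + wᵀy = yᵀA⁻¹y - yᵀB⁻¹y`.
  have hsq := hA.posSemidef.dotProduct_mulVec_nonneg (z - w)
  simp only [star_trivial, mulVec_sub, dotProduct_sub, sub_dotProduct, hAw, hwAz, hBz]
    at hsq hmono
  rw [dotProduct_comm y z, dotProduct_comm y w]
  linarith

lemma IsHermitian.iInf_eigenvalues_smul_one_le {A : Matrix n n ℝ} (hA : A.IsHermitian) :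
    (⨅ i, hA.eigenvalues i) • (1 : Matrix n n ℝ) ≤ A := by
  rw [← Algebra.algebraMap_eq_smul_one, algebraMap_le_iff_le_spectrum hA.isSelfAdjoint,
    hA.spectrum_real_eq_range_eigenvalues]
  rintro _ ⟨i, rfl⟩
  exact ciInf_le (Finite.bddBelow_range _) i

lemma PosDef.iInf_eigenvalues_smul_one {A : Matrix n n ℝ} (hA : A.PosDef) :
    ((⨅ i, hA.isHermitian.eigenvalues i) • (1 : Matrix n n ℝ)).PosDef := by
  rcases isEmpty_or_nonempty n with hn | hn
  · exact ⟨by ext i; exact isEmptyElim i, fun x hx => (hx (Subsingleton.elim _ _)).elim⟩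
  · obtain ⟨i, hi⟩ := exists_eq_ciInf_of_finite (f := hA.isHermitian.eigenvalues)
    rw [← hi]
    exact PosDef.one.smul (hA.eigenvalues_pos i)

end Matrix

theorem stmt18_general {d N : ℕ} (θstar : Fin d → ℝ)
    (x : Fin N → (Fin d → ℝ)) (η : Fin N → ℝ)
    (H : Matrix (Fin d) (Fin d) ℝ) (hH : H.PosDef) (h : Fin d → ℝ)
    (S : Matrix (Fin d) (Fin d) ℝ) (u θhat : Fin d → ℝ)
    (hS : S = H + ∑ k, Matrix.vecMulVec (x k) (x k))
    (hu : u = h + ∑ k, (x k ⬝ᵥ θstar + η k) • x k)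
    (hθhat : θhat = S⁻¹.mulVec u) :
    Real.sqrt ((θstar - θhat) ⬝ᵥ S.mulVec (θstar - θhat)) ≤
      Real.sqrt (H.mulVec θstar ⬝ᵥ H⁻¹.mulVec (H.mulVec θstar)) +
      Real.sqrt ((∑ k, η k • x k) ⬝ᵥ
        ((∑ k, Matrix.vecMulVec (x k) (x k)) +
          (⨅ i, hH.isHermitian.eigenvalues i) • (1 : Matrix (Fin d) (Fin d) ℝ))⁻¹.mulVec
        (∑ k, η k • x k)) +
      Real.sqrt (h ⬝ᵥ H⁻¹.mulVec h) := by
  set G := ∑ k, vecMulVec (x k) (x k)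
  have hG : G.PosSemidef :=
    posSemidef_sum _ fun k _ => by simpa using posSemidef_vecMulVec_self_star (x k)
  have hSpd : S.PosDef := hS ▸ hH.add_posSemidef hG
  have hHS : H ≤ S := by rw [hS, le_iff]; simpa using hG
  have hTS : G + (⨅ i, hH.isHermitian.eigenvalues i) • 1 ≤ S := by
    rw [hS, add_comm H]; exact add_le_add_right hH.isHermitian.iInf_eigenvalues_smul_one_le G
  have hres : S *ᵥ θstar - u = (H *ᵥ θstar - ∑ k, η k • x k) - h := by
    rw [hS, hu, add_mulVec, sum_vecMulVec_self_mulVec]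
    simp only [add_smul, Finset.sum_add_distrib]
    abel
  rw [hθhat, sub_inv_mulVec_dotProduct_mulVec hSpd.det_pos.ne'.isUnit, hres]
  have hSinv := hSpd.inv.posSemidef
  calc _ ≤ √((H *ᵥ θstar - ∑ k, η k • x k) ⬝ᵥ S⁻¹ *ᵥ (H *ᵥ θstar - ∑ k, η k • x k)) +
          √(h ⬝ᵥ S⁻¹ *ᵥ h) := sqrt_dotProduct_mulVec_sub_le hSinv _ _
    _ ≤ √(H *ᵥ θstar ⬝ᵥ S⁻¹ *ᵥ (H *ᵥ θstar)) +
          √((∑ k, η k • x k) ⬝ᵥ S⁻¹ *ᵥ (∑ k, η k • x k)) + √(h ⬝ᵥ S⁻¹ *ᵥ h) := by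
      gcongr; exact sqrt_dotProduct_mulVec_sub_le hSinv _ _
    _ ≤ _ := by
      gcongr √?_ + √?_ + √?_ <;> apply dotProduct_inv_mulVec_le_of_le
      exacts [hH, hHS, hH.iInf_eigenvalues_smul_one.posSemidef_add hG, hTS, hH, hHS]

/-- Deterministic decomposition for the confidence ellipsoid of the privatized
ridge-type estimator, separating perturbation bias, noise term, and privatizer
vector noise. -/
theorem stmt18 {d N : ℕ} (θstar : Fin d → ℝ)
    (hθ : Real.sqrt (θstar ⬝ᵥ θstar) ≤ 1)
    (x : Fin N → (Fin d → ℝ)) (η : Fin N → ℝ)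
    (H : Matrix (Fin d) (Fin d) ℝ) (hH : H.PosDef) (h : Fin d → ℝ)
    (S : Matrix (Fin d) (Fin d) ℝ) (u θhat : Fin d → ℝ)
    (hS : S = H + ∑ k, Matrix.vecMulVec (x k) (x k))
    (hu : u = h + ∑ k, (x k ⬝ᵥ θstar + η k) • x k)
    (hθhat : θhat = S⁻¹.mulVec u) :
    Real.sqrt ((θstar - θhat) ⬝ᵥ S.mulVec (θstar - θhat)) ≤
      Real.sqrt (H.mulVec θstar ⬝ᵥ H⁻¹.mulVec (H.mulVec θstar)) +
      Real.sqrt ((∑ k, η k • x k) ⬝ᵥ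
        ((∑ k, Matrix.vecMulVec (x k) (x k)) +
          (⨅ i, hH.isHermitian.eigenvalues i) • (1 : Matrix (Fin d) (Fin d) ℝ))⁻¹.mulVec
        (∑ k, η k • x k)) +
      Real.sqrt (h ⬝ᵥ H⁻¹.mulVec h) :=
  stmt18_general θstar x η H hH h S u θhat hS hu hθhat
end
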